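/- The derivative of the Dirichlet eta function at 1 satisfies η'(1) = γ·ln 2 - (1/2)(ln 2)² = (1/2)·ln(2^{2γ - ln 2}), where γ is the Euler–Mascheroni constant. -/

import Mathlib

/-!
Writing `A N = ∑_{n ≤ N} log n / n` and `H N` for the harmonic numbers, the even partial sums
`S (2M) = ∑_{n ≤ 2M} (-1)^n log n / n` equal `log 2 · H M + A M - A (2M)`, since the even terms
`2 log (2j) / (2j) = (log 2 + log j) / j` give `log 2 · H M + A M`. As `log x / x` decreases on
`[e, ∞)`, `A (2M) - A M` differs from `∫_M^{2M} log x / x dx = log 2 · log M + (log 2)^2 / 2` by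
at most `log M / M`. Hence `S (2M) = log 2 · (H M - log M) - (log 2)^2 / 2 + o(1)`, which tends
to `γ log 2 - (log 2)^2 / 2`.
-/

open Real Filter Finset

theorem sum_range_two_mul_neg_one_pow_succ_mul {R : Type*} [CommRing R] (f : ℕ → R) (M : ℕ) :
    ∑ k ∈ range (2 * M), (-1 : R) ^ (k + 1) * f (k + 1)
      = 2 * ∑ j ∈ range M, f (2 * (j + 1)) - ∑ k ∈ range (2 * M), f (k + 1) := by
  induction M with
  | zero => simp
  | succ M ih =>
    rw [show 2 * (M + 1) = 2 * M + 1 + 1 by ring]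
    have hodd : (-1 : R) ^ (2 * M + 1) = -1 := Odd.neg_one_pow ⟨M, rfl⟩
    have heven : (-1 : R) ^ (2 * M + 1 + 1) = 1 := by rw [pow_succ, hodd]; ring
    rw [sum_range_succ, sum_range_succ, ih, hodd, heven, sum_range_succ, sum_range_succ,
      sum_range_succ]
    ring_nf

theorem integral_log_div_self {a b : ℝ} (ha : 0 < a) (hb : 0 < b) :
    ∫ x in a..b, log x / x = (log b ^ 2 - log a ^ 2) / 2 := by
  have hpos : ∀ x ∈ Set.uIcc a b, x ≠ 0 := fun x hx =>
    ((lt_min ha hb).trans_le hx.1).ne'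
  have hderiv : ∀ x ∈ Set.uIcc a b, HasDerivAt (fun x => log x ^ 2 / 2) (log x / x) x :=
    fun x hx => (((hasDerivAt_log (hpos x hx)).pow 2).div_const 2).congr_deriv (by
      simp; ring)
  have hint : IntervalIntegrable (fun x => log x / x) MeasureTheory.volume a b :=
    (continuousOn_log.mono fun x hx => hpos x hx).div continuousOn_id hpos |>.intervalIntegrable
  rw [intervalIntegral.integral_eq_sub_of_hasDerivAt hderiv hint]
  ring

theorem tendsto_log_natCast_div_self :
    Tendsto (fun n : ℕ => log n / n) atTop (nhds 0) :=
  isLittleO_log_id_atTop.tendsto_div_nhds_zero.comp tendsto_natCast_atTop_atTop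

theorem AntitoneOn.sum_Ico_sub_integral_mem_Icc {f : ℝ → ℝ} {a b : ℕ} (hab : a ≤ b)
    (hf : AntitoneOn f (Set.Icc a b)) :
    ∑ k ∈ Ico a b, f (k + 1 : ℕ) - ∫ x in a..b, f x ∈ Set.Icc (f b - f a) 0 := by
  have hshift : ∑ k ∈ Ico a b, f (k + 1 : ℕ) = ∑ k ∈ Ico a b, f k + (f b - f a) := by
    rw [← sum_Ico_sub (fun k : ℕ => f k) hab, ← sum_add_distrib]
    simp
  constructor
  · linarith [hf.integral_le_sum_Ico hab]
  · linarith [hf.sum_le_integral_Ico hab]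

noncomputable def logDivSum (N : ℕ) : ℝ :=
  ∑ k ∈ range N, log (k + 1 : ℕ) / (k + 1 : ℕ)

theorem sum_range_two_mul_neg_one_pow_log_div (M : ℕ) :
    ∑ k ∈ range (2 * M), (-1 : ℝ) ^ (k + 1) * log (k + 1 : ℕ) / (k + 1 : ℕ)
      = log 2 * harmonic M + logDivSum M - logDivSum (2 * M) := by
  have hterm (j : ℕ) : 2 * (log (2 * (j + 1) : ℕ) / (2 * (j + 1) : ℕ))
      = log 2 * ((j + 1 : ℕ) : ℝ)⁻¹ + log (j + 1 : ℕ) / (j + 1 : ℕ) := by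
    push_cast
    rw [log_mul two_ne_zero (by positivity)]
    field_simp
  simp only [mul_div_assoc]
  rw [sum_range_two_mul_neg_one_pow_succ_mul (fun k => log k / k), mul_sum, sum_congr rfl
    fun j _ => hterm j, sum_add_distrib, ← mul_sum, harmonic, logDivSum, logDivSum]
  push_cast
  ring

theorem tendsto_logDivSum_two_mul_sub :
    Tendsto (fun M : ℕ => logDivSum (2 * M) - logDivSum M - (log 2 * log M + log 2 ^ 2 / 2))
      atTop (nhds 0) := by
  have htwo_mul : Tendsto (fun M : ℕ => 2 * M) atTop atTop :=
    tendsto_id.const_mul_atTop' two_pos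
  have hbounds : ∀ᶠ M : ℕ in atTop,
      logDivSum (2 * M) - logDivSum M - (log 2 * log M + log 2 ^ 2 / 2)
        ∈ Set.Icc (log (2 * M : ℕ) / (2 * M : ℕ) - log M / M) 0 := by
    filter_upwards [eventually_ge_atTop 3] with M hM
    have hM0 : (0 : ℝ) < M := by positivity
    have hanti : AntitoneOn (fun x => log x / x) (Set.Icc M (2 * M : ℕ)) :=
      log_div_self_antitoneOn.mono fun x hx =>
        (exp_one_lt_d9.trans (by norm_num)).le.trans ((Nat.ofNat_le_cast.mpr hM).trans hx.1)
    have hsum : logDivSum (2 * M) - logDivSum M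
        = ∑ k ∈ Ico M (2 * M), log (k + 1 : ℕ) / (k + 1 : ℕ) :=
      (sum_Ico_eq_sub _ (by omega)).symm
    have hint : ∫ x in (M : ℝ)..(2 * M : ℕ), log x / x = log 2 * log M + log 2 ^ 2 / 2 := by
      rw [integral_log_div_self hM0 (by positivity)]
      push_cast
      rw [log_mul two_ne_zero hM0.ne']
      ring
    rw [hsum, ← hint]
    exact hanti.sum_Ico_sub_integral_mem_Icc (by omega)
  refine tendsto_of_tendsto_of_tendsto_of_le_of_le' ?_ tendsto_const_nhds
    (hbounds.mono fun _ h => h.1) (hbounds.mono fun _ h => h.2)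
  simpa using ((tendsto_log_natCast_div_self.comp htwo_mul).sub tendsto_log_natCast_div_self)

theorem tendsto_sum_range_two_mul_neg_one_pow_log_div :
    Tendsto (fun M => ∑ k ∈ range (2 * M), (-1 : ℝ) ^ (k + 1) * log (k + 1 : ℕ) / (k + 1 : ℕ))
      atTop (nhds (eulerMascheroniConstant * log 2 - log 2 ^ 2 / 2)) := by
  have hlim := ((tendsto_harmonic_sub_log.const_mul (log 2)).sub
    tendsto_logDivSum_two_mul_sub).sub_const (log 2 ^ 2 / 2)
  rw [sub_zero, mul_comm] at hlim
  refine hlim.congr fun M => ?_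
  rw [sum_range_two_mul_neg_one_pow_log_div]
  ring

/-- The derivative of the Dirichlet eta function at `1`, i.e. the sum `η'(1)` of the
convergent series `∑_{k=1}^∞ (-1)^k ln k / k`, satisfies
`η'(1) = γ ln 2 - (1/2)(ln 2)² = (1/2) ln (2^{2γ - ln 2})`. -/
theorem eta_deriv_one (η'1 : ℝ)
    (h : Tendsto (fun N => ∑ k ∈ Finset.range N,
        (-1 : ℝ) ^ (k + 1) * Real.log ((k + 1 : ℕ) : ℝ) / ((k + 1 : ℕ) : ℝ))
      atTop (nhds η'1)) :
    η'1 = Real.eulerMascheroniConstant * Real.log 2 - (1 / 2) * (Real.log 2) ^ 2 ∧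
      η'1 = (1 / 2) * Real.log
        ((2 : ℝ) ^ (2 * Real.eulerMascheroniConstant - Real.log 2)) := by
  have hη : η'1 = eulerMascheroniConstant * log 2 - log 2 ^ 2 / 2 :=
    tendsto_nhds_unique (h.comp (tendsto_id.const_mul_atTop' two_pos))
      tendsto_sum_range_two_mul_neg_one_pow_log_div
  rw [log_rpow two_pos, hη]
  constructor <;> ring
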